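/- Let B be an oriented incidence matrix of a connected graph with diagonal weight matrix W having strictly positive entries, set L = B·W·Bᵀ with Moore–Penrose pseudoinverse L†, and let u ≠ v be the endpoints of some edge of the graph. Let R_uv = (e_u − e_v)ᵀ·L†·(e_u − e_v) be the effective resistance between u and v. Then for every δ ∈ ℝ, the perturbed Laplacian L(δ) = L + δ·(e_u − e_v)·(e_u − e_v)ᵀ is positive semidefinite if and only if δ ≥ −1/R_uv. In particular, L(δ) is positive semidefinite for all δ with |δ| < 1/R_uv, and this margin is exact. -/

import Mathlib

/-!
Connectivity makes the kernel of `L` the constants, which are orthogonal to `x = e_u - e_v`; as `L`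
is symmetric, `x` lies in its range, so `z = L†x` solves `Lz = x` and `R_uv = xᵀz = zᵀLz > 0`.
Cauchy–Schwarz for the semi-inner product `aᵀLb` gives `(xᵀy)² = (zᵀLy)² ≤ R_uv · yᵀLy`, hence
`yᵀ(L + δxxᵀ)y = yᵀLy + δ(xᵀy)² ≥ 0` as soon as `δ R_uv ≥ -1`; conversely, testing `y = z` gives
`R_uv + δ R_uv² ≥ 0`.
-/

open Matrix

/-- `B` is an oriented incidence matrix: every column has exactly one `1`,
exactly one `-1`, and zeros elsewhere. -/
def IsIncidenceMatrix {V E : Type*} (B : Matrix V E ℝ) : Prop :=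
  ∀ e : E, ∃ i j : V, i ≠ j ∧ B i e = 1 ∧ B j e = -1 ∧
    ∀ k : V, k ≠ i → k ≠ j → B k e = 0

namespace Matrix

theorem PosSemidef.isSymm {n : Type*} {M : Matrix n n ℝ} (hM : M.PosSemidef) : M.IsSymm :=
  isHermitian_iff_isSymm.mp hM.isHermitian

variable {n : Type*} [Fintype n]

theorem IsSymm.dotProduct_mulVec_comm {α : Type*} [CommSemiring α] {M : Matrix n n α}
    (hM : M.IsSymm) (a b : n → α) : a ⬝ᵥ M *ᵥ b = M *ᵥ a ⬝ᵥ b := by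
  rw [dotProduct_mulVec, ← mulVec_transpose, hM.eq]

theorem PosSemidef.dotProduct_mulVec_sq_le {M : Matrix n n ℝ} (hM : M.PosSemidef)
    (a b : n → ℝ) : (a ⬝ᵥ M *ᵥ b) ^ 2 ≤ (a ⬝ᵥ M *ᵥ a) * (b ⬝ᵥ M *ᵥ b) := by
  have hsymm : b ⬝ᵥ M *ᵥ a = a ⬝ᵥ M *ᵥ b := by
    rw [hM.isSymm.dotProduct_mulVec_comm, dotProduct_comm]
  have hquad : ∀ t : ℝ,
      0 ≤ (a ⬝ᵥ M *ᵥ a) * (t * t) + 2 * (a ⬝ᵥ M *ᵥ b) * t + b ⬝ᵥ M *ᵥ b := fun t => by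
    have := hM.dotProduct_mulVec_nonneg (t • a + b)
    simp only [star_trivial, mulVec_add, mulVec_smul, dotProduct_add, add_dotProduct,
      dotProduct_smul, smul_dotProduct, smul_eq_mul, hsymm] at this
    linarith
  have := discrim_le_zero hquad
  rw [discrim] at this
  linarith

theorem PosSemidef.posSemidef_add_smul_vecMulVec_iff {L : Matrix n n ℝ} (hL : L.PosSemidef)
    {x z : n → ℝ} (hz : L *ᵥ z = x) (hx : x ≠ 0) (δ : ℝ) :
    (L + δ • vecMulVec x x).PosSemidef ↔ -(1 / (x ⬝ᵥ z)) ≤ δ := by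
  set R := x ⬝ᵥ z
  have hRz : z ⬝ᵥ L *ᵥ z = R := by rw [hz, dotProduct_comm]
  have hR : 0 < R := by
    refine (hRz ▸ hL.dotProduct_mulVec_nonneg z : 0 ≤ R).lt_of_ne fun h => hx ?_
    rw [← hz, ← hL.dotProduct_mulVec_zero_iff, star_trivial, hRz, h]
  have hform : ∀ y, y ⬝ᵥ (L + δ • vecMulVec x x) *ᵥ y = y ⬝ᵥ L *ᵥ y + δ * (x ⬝ᵥ y) ^ 2 := by
    intro y
    rw [add_mulVec, smul_mulVec, vecMulVec_mulVec, op_smul_eq_smul, dotProduct_add,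
      dotProduct_smul, dotProduct_smul, dotProduct_comm y x, smul_eq_mul, smul_eq_mul]
    ring
  rw [← neg_div, div_le_iff₀ hR]
  constructor
  · intro h
    have := h.dotProduct_mulVec_nonneg z
    rw [star_trivial, hform, hRz] at this
    nlinarith
  · intro hδ
    have hsymm : (L + δ • vecMulVec x x).IsSymm :=
      hL.isSymm.add (IsSymm.smul (transpose_vecMulVec x x) δ)
    refine .of_dotProduct_mulVec_nonneg (isHermitian_iff_isSymm.mpr hsymm) fun y => ?_
    have hCS : (x ⬝ᵥ y) ^ 2 ≤ R * (y ⬝ᵥ L *ᵥ y) := by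
      have := hL.dotProduct_mulVec_sq_le z y
      rwa [hRz, hL.isSymm.dotProduct_mulVec_comm z, hz] at this
    rw [star_trivial, hform]
    nlinarith [sq_nonneg (x ⬝ᵥ y)]

theorem IsHermitian.exists_mulVec_eq_of_dotProduct_ker_eq_zero [DecidableEq n]
    {L : Matrix n n ℝ} (hL : L.IsHermitian) {x : n → ℝ}
    (hx : ∀ y, L *ᵥ y = 0 → x ⬝ᵥ y = 0) : ∃ y, L *ᵥ y = x := by
  have hmem : WithLp.toLp 2 x ∈ LinearMap.range L.toEuclideanLin := by
    rw [← Submodule.orthogonal_orthogonal (LinearMap.range _),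
      (isSymmetric_toEuclideanLin_iff.mpr hL).orthogonal_range]
    intro k hk
    rw [LinearMap.mem_ker] at hk
    have := hx k.ofLp (by simpa using congrArg WithLp.ofLp hk)
    simpa [EuclideanSpace.inner_eq_star_dotProduct, dotProduct_comm] using this
  obtain ⟨y, hy⟩ := hmem
  exact ⟨y.ofLp, by simpa using congrArg WithLp.ofLp hy⟩

end Matrix

open Matrix

section WeightedLaplacian

variable {V E : Type*} [Fintype V] [Fintype E] [DecidableEq E]

theorem posSemidef_mul_diagonal_mul_transpose (B : Matrix V E ℝ) {w : E → ℝ}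
    (hw : ∀ e, 0 ≤ w e) : (B * diagonal w * Bᵀ).PosSemidef := by
  simpa using (posSemidef_diagonal_iff.mpr hw).mul_mul_conjTranspose_same B

theorem mul_diagonal_mul_transpose_mulVec_eq_zero_iff (B : Matrix V E ℝ) {w : E → ℝ}
    (hw : ∀ e, 0 < w e) (y : V → ℝ) : (B * diagonal w * Bᵀ) *ᵥ y = 0 ↔ Bᵀ *ᵥ y = 0 := by
  refine ⟨fun h => ?_, fun h => by rw [← mulVec_mulVec, h, mulVec_zero]⟩
  have hquad : star (Bᵀ *ᵥ y) ⬝ᵥ diagonal w *ᵥ (Bᵀ *ᵥ y) = 0 := by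
    rw [star_trivial, mulVec_transpose, ← dotProduct_mulVec, ← mulVec_transpose, mulVec_mulVec,
      mulVec_mulVec, h, dotProduct_zero]
  have hdiag := ((posSemidef_diagonal_iff.mpr fun e => (hw e).le).dotProduct_mulVec_zero_iff
    _).mp hquad
  funext e
  simpa [mulVec_diagonal, (hw e).ne'] using congrFun hdiag e

end WeightedLaplacian

theorem single_edge_perturbation_margin_general
    {V E : Type*} [Fintype V] [Fintype E]
    [DecidableEq V] [DecidableEq E]
    (B : Matrix V E ℝ)
    (w : E → ℝ) (hw : ∀ e, 0 < w e)
    -- the graph is connected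
    (hConn : LinearMap.ker Bᵀ.mulVecLin = Submodule.span ℝ {(fun _ : V => (1 : ℝ))})
    -- `Ld` is the Moore–Penrose pseudoinverse of `L = B·W·Bᵀ`
    (Ld : Matrix V V ℝ)
    (hp1 : (B * Matrix.diagonal w * Bᵀ) * Ld * (B * Matrix.diagonal w * Bᵀ) =
      B * Matrix.diagonal w * Bᵀ)
    (u v : V) (huv : u ≠ v) :
    let Ruv : ℝ :=
      (Pi.single u 1 - Pi.single v 1) ⬝ᵥ Ld.mulVec (Pi.single u 1 - Pi.single v 1)
    (∀ δ : ℝ,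
      (B * Matrix.diagonal w * Bᵀ +
          δ • Matrix.vecMulVec (Pi.single u 1 - Pi.single v 1)
            (Pi.single u 1 - Pi.single v 1)).PosSemidef ↔ -(1 / Ruv) ≤ δ) ∧
    (∀ δ : ℝ, |δ| < 1 / Ruv →
      (B * Matrix.diagonal w * Bᵀ +
          δ • Matrix.vecMulVec (Pi.single u 1 - Pi.single v 1)
            (Pi.single u 1 - Pi.single v 1)).PosSemidef) := by
  intro Ruv
  set L := B * diagonal w * Bᵀ
  set x : V → ℝ := Pi.single u 1 - Pi.single v 1
  have hL : L.PosSemidef := posSemidef_mul_diagonal_mul_transpose B fun e => (hw e).le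
  have hx_ker : ∀ y, L *ᵥ y = 0 → x ⬝ᵥ y = 0 := by
    intro y hy
    have hy_const : y ∈ Submodule.span ℝ {fun _ => 1} := by
      rw [← hConn, LinearMap.mem_ker, mulVecLin_apply,
        ← mul_diagonal_mul_transpose_mulVec_eq_zero_iff B hw]
      exact hy
    obtain ⟨c, rfl⟩ := Submodule.mem_span_singleton.mp hy_const
    simp [x, sub_dotProduct]
  obtain ⟨y, hy⟩ := hL.isHermitian.exists_mulVec_eq_of_dotProduct_ker_eq_zero hx_ker
  have hLz : L *ᵥ (Ld *ᵥ x) = x := by rw [← hy, mulVec_mulVec, mulVec_mulVec, hp1]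
  have hx : x ≠ 0 := fun h => by simpa [x, huv] using congrFun h u
  have hmargin := hL.posSemidef_add_smul_vecMulVec_iff hLz hx
  exact ⟨hmargin, fun δ hδ => (hmargin δ).mpr (neg_le_of_abs_le hδ.le)⟩

/-- for an edge `{u,v}` of a connected positively weighted graph,
`L + δ·(e_u − e_v)·(e_u − e_v)ᵀ` is positive semidefinite iff `δ ≥ −1/R_uv`;
in particular it is positive semidefinite whenever `|δ| < 1/R_uv`, and this margin
is exact. -/
theorem single_edge_perturbation_margin
    {V E : Type*} [Fintype V] [Fintype E]
    [DecidableEq V] [DecidableEq E] [Nonempty V]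
    (B : Matrix V E ℝ) (hB : IsIncidenceMatrix B)
    (w : E → ℝ) (hw : ∀ e, 0 < w e)
    -- the graph is connected
    (hConn : LinearMap.ker Bᵀ.mulVecLin = Submodule.span ℝ {(fun _ : V => (1 : ℝ))})
    -- `Ld` is the Moore–Penrose pseudoinverse of `L = B·W·Bᵀ`
    (Ld : Matrix V V ℝ)
    (hp1 : (B * Matrix.diagonal w * Bᵀ) * Ld * (B * Matrix.diagonal w * Bᵀ) =
      B * Matrix.diagonal w * Bᵀ)
    (hp2 : Ld * (B * Matrix.diagonal w * Bᵀ) * Ld = Ld)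
    (hp3 : ((B * Matrix.diagonal w * Bᵀ) * Ld)ᵀ = (B * Matrix.diagonal w * Bᵀ) * Ld)
    (hp4 : (Ld * (B * Matrix.diagonal w * Bᵀ))ᵀ = Ld * (B * Matrix.diagonal w * Bᵀ))
    (u v : V) (huv : u ≠ v)
    -- `u` and `v` are the endpoints of some edge
    (hedge : ∃ e : E, B u e = 1 ∧ B v e = -1) :
    let Ruv : ℝ :=
      (Pi.single u 1 - Pi.single v 1) ⬝ᵥ Ld.mulVec (Pi.single u 1 - Pi.single v 1)
    (∀ δ : ℝ,
      (B * Matrix.diagonal w * Bᵀ +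
          δ • Matrix.vecMulVec (Pi.single u 1 - Pi.single v 1)
            (Pi.single u 1 - Pi.single v 1)).PosSemidef ↔ -(1 / Ruv) ≤ δ) ∧
    (∀ δ : ℝ, |δ| < 1 / Ruv →
      (B * Matrix.diagonal w * Bᵀ +
          δ • Matrix.vecMulVec (Pi.single u 1 - Pi.single v 1)
            (Pi.single u 1 - Pi.single v 1)).PosSemidef) :=
  single_edge_perturbation_margin_general B w hw hConn Ld hp1 u v huv
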